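/- (Power-scaling Case I, equations (34)–(37)) If α = ε = 1 and γ > 0, then lim_{M→∞} R̃_i(M) = min(R̄_{1,i}, R̄_{2,i}), where R̄_{1,i} = λ·log₂(1 + E_u·(ψ_{AR,i}² + ψ_{BR,i}²)/(ψ_{AR,i} + ψ_{BR,i})), R̄_{XR,i} = λ·log₂(1 + E_u·ψ_{XR,i}²/(ψ_{AR,i} + ψ_{BR,i})) for X ∈ {A,B}, R̄_{RX,i} = λ·log₂(1 + E_r·ψ_{XR,i}²/S) for X ∈ {A,B}, and R̄_{2,i} = min(R̄_{AR,i}, R̄_{RB,i}) + min(R̄_{BR,i}, R̄_{RA,i}). -/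

import Mathlib

open Real Filter Topology Finset

noncomputable section

/-- `η = τ·p_p·β/(1+τ·p_p·β)`. -/
def etaP (τ pp β : ℝ) : ℝ := τ * pp * β / (1 + τ * pp * β)

/-- `ω = β(K+η)/(K+1)`. -/
def omegaP (τ pp β K : ℝ) : ℝ := β * (K + etaP τ pp β) / (K + 1)

/-- `σ² = β/((1+τ·p_p·β)(K+1))`. -/
def sigma2P (τ pp β K : ℝ) : ℝ := β / ((1 + τ * pp * β) * (K + 1))

/-- Generic interference coefficient: with `(b₁,k₁)` and `(b₂,k₂)` the two links involved,
`b₁·b₂/((k₁+1)(k₂+1))·[(k₁+η₁)/(1+τ·p_p·b₂) + k₂·η₁ + k₁·η₂ + η₁·η₂]`.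
It specializes to `ξ_{XR,ij}`, `χ_{XR,ij}` and `ζ_{XR,ij}` of (25)–(27). -/
def xiP (τ pp b1 k1 b2 k2 : ℝ) : ℝ :=
  b1 * b2 / ((k1 + 1) * (k2 + 1)) *
    ((k1 + etaP τ pp b1) / (1 + τ * pp * b2) + k2 * etaP τ pp b1
      + k1 * etaP τ pp b2 + etaP τ pp b1 * etaP τ pp b2)

variable {N : ℕ}

/-- `q_i = p_u σ²_{AR,i} + p_u σ²_{BR,i} + 1`. -/
def qP (τ pp pu : ℝ) (βA βB KA KB : Fin N → ℝ) (i : Fin N) : ℝ :=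
  pu * sigma2P τ pp (βA i) (KA i) + pu * sigma2P τ pp (βB i) (KB i) + 1

/-- `Q_i = Σ_{j≠i} p_u·(ξ_{AR,ij}+ξ_{BR,ij}+χ_{AR,ij}+χ_{BR,ij})`. -/
def QP (τ pp pu : ℝ) (βA βB KA KB : Fin N → ℝ) (i : Fin N) : ℝ :=
  ∑ j ∈ Finset.univ \ {i},
    pu * (xiP τ pp (βA i) (KA i) (βA j) (KA j) + xiP τ pp (βB i) (KB i) (βA j) (KA j)
      + xiP τ pp (βA i) (KA i) (βB j) (KB j) + xiP τ pp (βB i) (KB i) (βB j) (KB j))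

/-- `Z_{ij} = p_r·(ζ_{AR,ij}+ζ_{BR,ij})`. -/
def ZP (τ pp pr : ℝ) (βA βB KA KB : Fin N → ℝ) (i j : Fin N) : ℝ :=
  pr * (xiP τ pp (βA j) (KA j) (βA i) (KA i) + xiP τ pp (βB j) (KB j) (βA i) (KA i))

/-- `R̃_{1,i}(M)` of Theorem 1 (uplink phase). -/
def R1P (lam τ pp pu : ℝ) (βA βB KA KB : Fin N → ℝ) (i : Fin N) (M : ℝ) : ℝ :=
  lam * logb 2 (1 +
    (M * pu * (omegaP τ pp (βA i) (KA i)) ^ 2 + M * pu * (omegaP τ pp (βB i) (KB i)) ^ 2)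
      / ((omegaP τ pp (βA i) (KA i) + omegaP τ pp (βB i) (KB i)) * qP τ pp pu βA βB KA KB i
          + QP τ pp pu βA βB KA KB i))

/-- `R̃_{AR,i}(M)` of Theorem 1. -/
def RARP (lam τ pp pu : ℝ) (βA βB KA KB : Fin N → ℝ) (i : Fin N) (M : ℝ) : ℝ :=
  lam * logb 2 (1 + M * pu * (omegaP τ pp (βA i) (KA i)) ^ 2
      / ((omegaP τ pp (βA i) (KA i) + omegaP τ pp (βB i) (KB i)) * qP τ pp pu βA βB KA KB i
          + QP τ pp pu βA βB KA KB i))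

/-- `R̃_{BR,i}(M)` of Theorem 1. -/
def RBRP (lam τ pp pu : ℝ) (βA βB KA KB : Fin N → ℝ) (i : Fin N) (M : ℝ) : ℝ :=
  lam * logb 2 (1 + M * pu * (omegaP τ pp (βB i) (KB i)) ^ 2
      / ((omegaP τ pp (βA i) (KA i) + omegaP τ pp (βB i) (KB i)) * qP τ pp pu βA βB KA KB i
          + QP τ pp pu βA βB KA KB i))

/-- `R̃_{RA,i}(M)` of Theorem 1 (downlink to `U_{A,i}`). -/
def RRAP (lam τ pp pr : ℝ) (βA βB KA KB : Fin N → ℝ) (i : Fin N) (M : ℝ) : ℝ :=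
  lam * logb 2 (1 + M * pr * (omegaP τ pp (βA i) (KA i)) ^ 2
      / (∑ j, (omegaP τ pp (βA j) (KA j) + omegaP τ pp (βB j) (KB j)
          + ZP τ pp pr βA βB KA KB i j)))

/-- `R̃_{RB,i}(M)` of Theorem 1 (downlink to `U_{B,i}`). -/
def RRBP (lam τ pp pr : ℝ) (βA βB KA KB : Fin N → ℝ) (i : Fin N) (M : ℝ) : ℝ :=
  lam * logb 2 (1 + M * pr * (omegaP τ pp (βB i) (KB i)) ^ 2
      / (∑ j, (omegaP τ pp (βA j) (KA j) + omegaP τ pp (βB j) (KB j)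
          + ZP τ pp pr βA βB KA KB i j)))

/-- `R̃_{2,i}(M) = min(R̃_{AR,i}, R̃_{RB,i}) + min(R̃_{BR,i}, R̃_{RA,i})`. -/
def R2P (lam τ pp pu pr : ℝ) (βA βB KA KB : Fin N → ℝ) (i : Fin N) (M : ℝ) : ℝ :=
  min (RARP lam τ pp pu βA βB KA KB i M) (RRBP lam τ pp pr βA βB KA KB i M)
    + min (RBRP lam τ pp pu βA βB KA KB i M) (RRAP lam τ pp pr βA βB KA KB i M)

/-- `R̃_i(M) = min(R̃_{1,i}(M), R̃_{2,i}(M))`. -/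
def RtotP (lam τ pp pu pr : ℝ) (βA βB KA KB : Fin N → ℝ) (i : Fin N) (M : ℝ) : ℝ :=
  min (R1P lam τ pp pu βA βB KA KB i M) (R2P lam τ pp pu pr βA βB KA KB i M)

end

/-!
As `p_p → 0` every `η` vanishes, so `ω_{XR,j} → ψ_{XR,j}` while `σ²` and the interference
coefficients `ξ, χ, ζ` converge to finite limits. With `α = ε = 1` the powers `p_u, p_r` tend to
`0` while `M·p_u = E_u` and `M·p_r = E_r`: the signal terms keep their factor `M` and converge,
whereas `q_i → 1` and `Q_i, Z_{ij} → 0`, which carry a power but no `M`. So every SINR of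
Theorem 1 converges to its `ψ`-expression, and continuity of `log₂`, `min` and `+` does the rest.
-/

noncomputable def psiP (β K : ℝ) : ℝ := β * K / (K + 1)

lemma psiP_pos {β K : ℝ} (hβ : 0 < β) (hK : 0 < K) : 0 < psiP β K := by
  unfold psiP
  positivity

lemma tendsto_const_div_natCast_rpow_atTop {δ : ℝ} (hδ : 0 < δ) (E : ℝ) :
    Tendsto (fun M : ℕ => E / (M : ℝ) ^ δ) atTop (𝓝 0) :=
  tendsto_const_nhds.div_atTop ((tendsto_rpow_atTop hδ).comp tendsto_natCast_atTop_atTop)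

lemma tendsto_natCast_mul_div_rpow_one (E : ℝ) :
    Tendsto (fun M : ℕ => (M : ℝ) * (E / (M : ℝ) ^ (1 : ℝ))) atTop (𝓝 E) := by
  refine tendsto_const_nhds.congr' ?_
  filter_upwards [eventually_ne_atTop 0] with M hM
  have hM' : (M : ℝ) ≠ 0 := Nat.cast_ne_zero.mpr hM
  rw [rpow_one, mul_div_cancel₀ _ hM']

lemma tendsto_const_mul_logb_one_add {ι : Type*} {l : Filter ι} {f : ι → ℝ} {F : ℝ}
    (hf : Tendsto f l (𝓝 F)) (hF : 0 ≤ F) (lam : ℝ) :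
    Tendsto (fun x => lam * logb 2 (1 + f x)) l (𝓝 (lam * logb 2 (1 + F))) :=
  ((continuousAt_logb (by positivity)).tendsto.comp (hf.const_add 1)).const_mul lam

section VanishingPowers

variable {ι : Type*} {l : Filter ι} {pp pu pr : ι → ℝ} {N : ℕ}

lemma tendsto_etaP (hpp : Tendsto pp l (𝓝 0)) (τ β : ℝ) :
    Tendsto (fun x => etaP τ (pp x) β) l (𝓝 0) := by
  have hlin : Tendsto (fun x => τ * pp x * β) l (𝓝 0) := by
    simpa using (hpp.const_mul τ).mul_const β
  simpa [etaP, Pi.div_def] using hlin.div (hlin.const_add 1) (by norm_num)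

lemma tendsto_omegaP (hpp : Tendsto pp l (𝓝 0)) (τ β K : ℝ) :
    Tendsto (fun x => omegaP τ (pp x) β K) l (𝓝 (psiP β K)) := by
  simpa [omegaP, psiP] using
    (((tendsto_etaP hpp τ β).const_add K).const_mul β).div_const (K + 1)

lemma tendsto_sigma2P (hpp : Tendsto pp l (𝓝 0)) (τ β K : ℝ) :
    Tendsto (fun x => sigma2P τ (pp x) β K) l (𝓝 (β / (K + 1))) := by
  have hden : Tendsto (fun x => 1 + τ * pp x * β) l (𝓝 1) := by
    simpa using ((hpp.const_mul τ).mul_const β).const_add 1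
  simpa [sigma2P, Pi.div_def, div_div, mul_comm] using
    (tendsto_const_nhds (x := β / (K + 1))).div hden one_ne_zero

lemma tendsto_xiP (hpp : Tendsto pp l (𝓝 0)) (τ b1 k1 b2 k2 : ℝ) :
    Tendsto (fun x => xiP τ (pp x) b1 k1 b2 k2) l
      (𝓝 (b1 * b2 / ((k1 + 1) * (k2 + 1)) * k1)) := by
  have hη1 := tendsto_etaP hpp τ b1
  have hη2 := tendsto_etaP hpp τ b2
  have hden : Tendsto (fun x => 1 + τ * pp x * b2) l (𝓝 1) := by
    simpa using ((hpp.const_mul τ).mul_const b2).const_add 1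
  have hfirst : Tendsto (fun x => (k1 + etaP τ (pp x) b1) / (1 + τ * pp x * b2)) l (𝓝 k1) := by
    simpa [Pi.div_def] using (hη1.const_add k1).div hden one_ne_zero
  have hbracket := ((hfirst.add (hη1.const_mul k2)).add (hη2.const_mul k1)).add (hη1.mul hη2)
  simp only [mul_zero, add_zero] at hbracket
  simpa [xiP] using hbracket.const_mul (b1 * b2 / ((k1 + 1) * (k2 + 1)))

variable (βA βB KA KB : Fin N → ℝ) (i : Fin N)

lemma tendsto_qP (hpp : Tendsto pp l (𝓝 0)) (hpu : Tendsto pu l (𝓝 0)) (τ : ℝ) :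
    Tendsto (fun x => qP τ (pp x) (pu x) βA βB KA KB i) l (𝓝 1) := by
  simpa [qP] using ((hpu.mul (tendsto_sigma2P hpp τ (βA i) (KA i))).add
    (hpu.mul (tendsto_sigma2P hpp τ (βB i) (KB i)))).add_const 1

lemma tendsto_QP (hpp : Tendsto pp l (𝓝 0)) (hpu : Tendsto pu l (𝓝 0)) (τ : ℝ) :
    Tendsto (fun x => QP τ (pp x) (pu x) βA βB KA KB i) l (𝓝 0) := by
  have hterm : ∀ j ∈ univ \ {i}, Tendsto (fun x => pu x *
      (xiP τ (pp x) (βA i) (KA i) (βA j) (KA j) + xiP τ (pp x) (βB i) (KB i) (βA j) (KA j)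
        + xiP τ (pp x) (βA i) (KA i) (βB j) (KB j)
        + xiP τ (pp x) (βB i) (KB i) (βB j) (KB j))) l (𝓝 0) := fun j _ => by
    simpa using hpu.mul ((((tendsto_xiP hpp τ _ _ _ _).add (tendsto_xiP hpp τ _ _ _ _)).add
      (tendsto_xiP hpp τ _ _ _ _)).add (tendsto_xiP hpp τ _ _ _ _))
  simpa [QP] using tendsto_finsetSum _ hterm

lemma tendsto_ZP (hpp : Tendsto pp l (𝓝 0)) (hpr : Tendsto pr l (𝓝 0)) (τ : ℝ)
    (j : Fin N) :
    Tendsto (fun x => ZP τ (pp x) (pr x) βA βB KA KB i j) l (𝓝 0) := by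
  simpa [ZP] using hpr.mul ((tendsto_xiP hpp τ _ _ _ _).add (tendsto_xiP hpp τ _ _ _ _))

lemma tendsto_uplink_denominator (hpp : Tendsto pp l (𝓝 0)) (hpu : Tendsto pu l (𝓝 0))
    (τ : ℝ) :
    Tendsto (fun x =>
        (omegaP τ (pp x) (βA i) (KA i) + omegaP τ (pp x) (βB i) (KB i))
          * qP τ (pp x) (pu x) βA βB KA KB i + QP τ (pp x) (pu x) βA βB KA KB i) l
      (𝓝 (psiP (βA i) (KA i) + psiP (βB i) (KB i))) := by
  simpa using (((tendsto_omegaP hpp τ _ _).add (tendsto_omegaP hpp τ _ _)).mul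
    (tendsto_qP βA βB KA KB i hpp hpu τ)).add (tendsto_QP βA βB KA KB i hpp hpu τ)

lemma tendsto_downlink_denominator (hpp : Tendsto pp l (𝓝 0)) (hpr : Tendsto pr l (𝓝 0))
    (τ : ℝ) :
    Tendsto (fun x => ∑ j, (omegaP τ (pp x) (βA j) (KA j) + omegaP τ (pp x) (βB j) (KB j)
        + ZP τ (pp x) (pr x) βA βB KA KB i j)) l
      (𝓝 (∑ j, (psiP (βA j) (KA j) + psiP (βB j) (KB j)))) :=
  tendsto_finsetSum _ fun j _ => by
    simpa using ((tendsto_omegaP hpp τ _ _).add (tendsto_omegaP hpp τ _ _)).add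
      (tendsto_ZP βA βB KA KB i hpp hpr τ j)

end VanishingPowers

section Rates

variable {ι : Type*} {l : Filter ι} {pp pu pr M : ι → ℝ} {Eu Er : ℝ} {N : ℕ}
  (βA βB KA KB : Fin N → ℝ) (i : Fin N) (lam τ : ℝ)

lemma tendsto_R1P (hpp : Tendsto pp l (𝓝 0)) (hpu : Tendsto pu l (𝓝 0))
    (hMpu : Tendsto (fun x => M x * pu x) l (𝓝 Eu)) (hEu : 0 ≤ Eu)
    (hψ : 0 < psiP (βA i) (KA i) + psiP (βB i) (KB i)) :
    Tendsto (fun x => R1P lam τ (pp x) (pu x) βA βB KA KB i (M x)) l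
      (𝓝 (lam * logb 2 (1 + Eu * (psiP (βA i) (KA i) ^ 2 + psiP (βB i) (KB i) ^ 2)
        / (psiP (βA i) (KA i) + psiP (βB i) (KB i))))) := by
  have hsnr := ((hMpu.mul ((tendsto_omegaP hpp τ (βA i) (KA i)).pow 2)).add
    (hMpu.mul ((tendsto_omegaP hpp τ (βB i) (KB i)).pow 2))).div
    (tendsto_uplink_denominator βA βB KA KB i hpp hpu τ) hψ.ne'
  rw [← mul_add] at hsnr
  simpa [R1P, Pi.div_def] using
    tendsto_const_mul_logb_one_add hsnr (div_nonneg (by positivity) hψ.le) lam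

lemma tendsto_RARP (hpp : Tendsto pp l (𝓝 0)) (hpu : Tendsto pu l (𝓝 0))
    (hMpu : Tendsto (fun x => M x * pu x) l (𝓝 Eu)) (hEu : 0 ≤ Eu)
    (hψ : 0 < psiP (βA i) (KA i) + psiP (βB i) (KB i)) :
    Tendsto (fun x => RARP lam τ (pp x) (pu x) βA βB KA KB i (M x)) l
      (𝓝 (lam * logb 2 (1 + Eu * psiP (βA i) (KA i) ^ 2
        / (psiP (βA i) (KA i) + psiP (βB i) (KB i))))) := by
  have hsnr := (hMpu.mul ((tendsto_omegaP hpp τ (βA i) (KA i)).pow 2)).div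
    (tendsto_uplink_denominator βA βB KA KB i hpp hpu τ) hψ.ne'
  simpa [RARP, Pi.div_def] using
    tendsto_const_mul_logb_one_add hsnr (div_nonneg (by positivity) hψ.le) lam

lemma tendsto_RBRP (hpp : Tendsto pp l (𝓝 0)) (hpu : Tendsto pu l (𝓝 0))
    (hMpu : Tendsto (fun x => M x * pu x) l (𝓝 Eu)) (hEu : 0 ≤ Eu)
    (hψ : 0 < psiP (βA i) (KA i) + psiP (βB i) (KB i)) :
    Tendsto (fun x => RBRP lam τ (pp x) (pu x) βA βB KA KB i (M x)) l
      (𝓝 (lam * logb 2 (1 + Eu * psiP (βB i) (KB i) ^ 2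
        / (psiP (βA i) (KA i) + psiP (βB i) (KB i))))) := by
  have hsnr := (hMpu.mul ((tendsto_omegaP hpp τ (βB i) (KB i)).pow 2)).div
    (tendsto_uplink_denominator βA βB KA KB i hpp hpu τ) hψ.ne'
  simpa [RBRP, Pi.div_def] using
    tendsto_const_mul_logb_one_add hsnr (div_nonneg (by positivity) hψ.le) lam

lemma tendsto_RRAP (hpp : Tendsto pp l (𝓝 0)) (hpr : Tendsto pr l (𝓝 0))
    (hMpr : Tendsto (fun x => M x * pr x) l (𝓝 Er)) (hEr : 0 ≤ Er)
    (hS : 0 < ∑ j, (psiP (βA j) (KA j) + psiP (βB j) (KB j))) :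
    Tendsto (fun x => RRAP lam τ (pp x) (pr x) βA βB KA KB i (M x)) l
      (𝓝 (lam * logb 2 (1 + Er * psiP (βA i) (KA i) ^ 2
        / ∑ j, (psiP (βA j) (KA j) + psiP (βB j) (KB j))))) := by
  have hsnr := (hMpr.mul ((tendsto_omegaP hpp τ (βA i) (KA i)).pow 2)).div
    (tendsto_downlink_denominator βA βB KA KB i hpp hpr τ) hS.ne'
  simpa [RRAP, Pi.div_def] using
    tendsto_const_mul_logb_one_add hsnr (div_nonneg (by positivity) hS.le) lam

lemma tendsto_RRBP (hpp : Tendsto pp l (𝓝 0)) (hpr : Tendsto pr l (𝓝 0))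
    (hMpr : Tendsto (fun x => M x * pr x) l (𝓝 Er)) (hEr : 0 ≤ Er)
    (hS : 0 < ∑ j, (psiP (βA j) (KA j) + psiP (βB j) (KB j))) :
    Tendsto (fun x => RRBP lam τ (pp x) (pr x) βA βB KA KB i (M x)) l
      (𝓝 (lam * logb 2 (1 + Er * psiP (βB i) (KB i) ^ 2
        / ∑ j, (psiP (βA j) (KA j) + psiP (βB j) (KB j))))) := by
  have hsnr := (hMpr.mul ((tendsto_omegaP hpp τ (βB i) (KB i)).pow 2)).div
    (tendsto_downlink_denominator βA βB KA KB i hpp hpr τ) hS.ne'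
  simpa [RRBP, Pi.div_def] using
    tendsto_const_mul_logb_one_add hsnr (div_nonneg (by positivity) hS.le) lam

theorem tendsto_RtotP (hpp : Tendsto pp l (𝓝 0))
    (hpu : Tendsto pu l (𝓝 0)) (hMpu : Tendsto (fun x => M x * pu x) l (𝓝 Eu))
    (hpr : Tendsto pr l (𝓝 0)) (hMpr : Tendsto (fun x => M x * pr x) l (𝓝 Er))
    (hEu : 0 ≤ Eu) (hEr : 0 ≤ Er) (hβA : ∀ j, 0 < βA j) (hβB : ∀ j, 0 < βB j)
    (hKA : ∀ j, 0 < KA j) (hKB : ∀ j, 0 < KB j) :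
    Tendsto (fun x => RtotP lam τ (pp x) (pu x) (pr x) βA βB KA KB i (M x)) l
      (𝓝 (min
        (lam * logb 2 (1 + Eu * (psiP (βA i) (KA i) ^ 2 + psiP (βB i) (KB i) ^ 2)
          / (psiP (βA i) (KA i) + psiP (βB i) (KB i))))
        (min (lam * logb 2 (1 + Eu * psiP (βA i) (KA i) ^ 2
              / (psiP (βA i) (KA i) + psiP (βB i) (KB i))))
            (lam * logb 2 (1 + Er * psiP (βB i) (KB i) ^ 2
              / ∑ j, (psiP (βA j) (KA j) + psiP (βB j) (KB j))))
          + min (lam * logb 2 (1 + Eu * psiP (βB i) (KB i) ^ 2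
              / (psiP (βA i) (KA i) + psiP (βB i) (KB i))))
            (lam * logb 2 (1 + Er * psiP (βA i) (KA i) ^ 2
              / ∑ j, (psiP (βA j) (KA j) + psiP (βB j) (KB j))))))) := by
  have hψ (j : Fin N) : 0 < psiP (βA j) (KA j) + psiP (βB j) (KB j) :=
    add_pos (psiP_pos (hβA j) (hKA j)) (psiP_pos (hβB j) (hKB j))
  have hS : 0 < ∑ j, (psiP (βA j) (KA j) + psiP (βB j) (KB j)) :=
    sum_pos (fun j _ => hψ j) ⟨i, mem_univ i⟩
  exact (tendsto_R1P βA βB KA KB i lam τ hpp hpu hMpu hEu (hψ i)).min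
    ((tendsto_RARP βA βB KA KB i lam τ hpp hpu hMpu hEu (hψ i)).min
        (tendsto_RRBP βA βB KA KB i lam τ hpp hpr hMpr hEr hS)
      |>.add ((tendsto_RBRP βA βB KA KB i lam τ hpp hpu hMpu hEu (hψ i)).min
        (tendsto_RRAP βA βB KA KB i lam τ hpp hpr hMpr hEr hS)))

end Rates

theorem power_scaling_case_I_general
    (N : ℕ) (i : Fin N) (τ : ℝ)
    (lam : ℝ)
    (Eu Er Ep : ℝ) (hEu : 0 < Eu) (hEr : 0 < Er)
    (βA βB KA KB : Fin N → ℝ)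
    (hβA : ∀ j, 0 < βA j) (hβB : ∀ j, 0 < βB j)
    (hKA : ∀ j, 0 < KA j) (hKB : ∀ j, 0 < KB j)
    (α ε γ : ℝ) (hα : α = 1) (hε : ε = 1) (hγ : 0 < γ)
    (psiA psiB : Fin N → ℝ)
    (hpsiA : ∀ j, psiA j = βA j * KA j / (KA j + 1))
    (hpsiB : ∀ j, psiB j = βB j * KB j / (KB j + 1))
    (S : ℝ) (hS : S = ∑ j, (psiA j + psiB j)) :
    Tendsto (fun M : ℕ =>
        RtotP lam τ (Ep / (M : ℝ) ^ γ) (Eu / (M : ℝ) ^ α) (Er / (M : ℝ) ^ ε)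
          βA βB KA KB i (M : ℝ))
      atTop
      (𝓝 (min
        (lam * logb 2 (1 + Eu * ((psiA i) ^ 2 + (psiB i) ^ 2) / (psiA i + psiB i)))
        (min (lam * logb 2 (1 + Eu * (psiA i) ^ 2 / (psiA i + psiB i)))
             (lam * logb 2 (1 + Er * (psiB i) ^ 2 / S))
          + min (lam * logb 2 (1 + Eu * (psiB i) ^ 2 / (psiA i + psiB i)))
                (lam * logb 2 (1 + Er * (psiA i) ^ 2 / S))))) := by
  subst hα hε hS
  obtain rfl : psiA = fun j => psiP (βA j) (KA j) := funext hpsiA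
  obtain rfl : psiB = fun j => psiP (βB j) (KB j) := funext hpsiB
  exact tendsto_RtotP βA βB KA KB i lam τ (tendsto_const_div_natCast_rpow_atTop hγ Ep)
    (tendsto_const_div_natCast_rpow_atTop one_pos Eu) (tendsto_natCast_mul_div_rpow_one Eu)
    (tendsto_const_div_natCast_rpow_atTop one_pos Er) (tendsto_natCast_mul_div_rpow_one Er)
    hEu.le hEr.le hβA hβB hKA hKB

/-- Power-scaling Case I, equations (34)–(37): if `α = ε = 1` and `γ > 0`
then `R̃_i(M) → min(R̄_{1,i}, R̄_{2,i})` as `M → ∞`. -/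
theorem power_scaling_case_I
    (N : ℕ) (hN : 1 ≤ N) (i : Fin N) (T τ : ℝ) (hτ : 0 < τ) (hT : τ < T)
    (lam : ℝ) (hlam : lam = (T - τ) / (2 * T))
    (Eu Er Ep : ℝ) (hEu : 0 < Eu) (hEr : 0 < Er) (hEp : 0 < Ep)
    (βA βB KA KB : Fin N → ℝ)
    (hβA : ∀ j, 0 < βA j) (hβB : ∀ j, 0 < βB j)
    (hKA : ∀ j, 0 < KA j) (hKB : ∀ j, 0 < KB j)
    (α ε γ : ℝ) (hα : α = 1) (hε : ε = 1) (hγ : 0 < γ)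
    (psiA psiB : Fin N → ℝ)
    (hpsiA : ∀ j, psiA j = βA j * KA j / (KA j + 1))
    (hpsiB : ∀ j, psiB j = βB j * KB j / (KB j + 1))
    (S : ℝ) (hS : S = ∑ j, (psiA j + psiB j)) :
    Tendsto (fun M : ℕ =>
        RtotP lam τ (Ep / (M : ℝ) ^ γ) (Eu / (M : ℝ) ^ α) (Er / (M : ℝ) ^ ε)
          βA βB KA KB i (M : ℝ))
      atTop
      (𝓝 (min
        (lam * logb 2 (1 + Eu * ((psiA i) ^ 2 + (psiB i) ^ 2) / (psiA i + psiB i)))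
        (min (lam * logb 2 (1 + Eu * (psiA i) ^ 2 / (psiA i + psiB i)))
             (lam * logb 2 (1 + Er * (psiB i) ^ 2 / S))
          + min (lam * logb 2 (1 + Eu * (psiB i) ^ 2 / (psiA i + psiB i)))
                (lam * logb 2 (1 + Er * (psiA i) ^ 2 / S))))) :=
  power_scaling_case_I_general N i τ lam Eu Er Ep hEu hEr βA βB KA KB hβA hβB hKA hKB α ε γ hα hε hγ
    psiA psiB hpsiA hpsiB S hS
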